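/- Let G be a finite 2-group such that G/Z(G) is isomorphic to a dihedral group of order 2^(ℓ+1) with ℓ ≥ 2. Then the derived subgroup [G,G] is cyclic of order 2^ℓ. -/

import Mathlib

/-!
Lift the rotation `r 1` and the reflection `sr 0` of the dihedral central quotient to `a, b ∈ G`
and put `c = ⁅a, b⁆`. Modulo the centre `c ≡ a²`, so `a` commutes with `c`; and `b²` is central, so
`b` inverts `c`. Every element of `G` is `a ^ m * z` or `b * a ^ m * z` with `z` central, and
commutators only see cosets of the centre, so computing them shows `⁅G, G⁆ = ⟨c⟩`. Finally
`c ^ k = ⁅a ^ k, b⁆` is trivial exactly when `a ^ k` is central, i.e. when `r 1 ^ k = 1`, so `c`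
has the same order `2 ^ ℓ` as `r 1`.
-/

open Subgroup DihedralGroup
open scoped commutatorElement

section DihedralPair

variable {G : Type*} [Group G] {a b : G}

theorem conj_zpow_eq_of_commute_commutatorElement (hac : Commute a ⁅a, b⁆) (k : ℤ) :
    b * a ^ k * b⁻¹ = ⁅a, b⁆ ^ (-k) * a ^ k := by
  rw [← conj_zpow, show b * a * b⁻¹ = ⁅a, b⁆⁻¹ * a by rw [commutatorElement_def]; group,
    hac.symm.inv_left.mul_zpow, zpow_neg, inv_zpow]

theorem commutatorElement_zpow_left (hac : Commute a ⁅a, b⁆) (k : ℤ) :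
    ⁅a ^ k, b⁆ = ⁅a, b⁆ ^ k :=
  calc ⁅a ^ k, b⁆ = a ^ k * (b * a ^ k * b⁻¹)⁻¹ := by rw [commutatorElement_def]; group
    _ = ⁅a, b⁆ ^ k := by rw [conj_zpow_eq_of_commute_commutatorElement hac]; group

theorem conj_commutatorElement_zpow (hba : Commute (b ^ 2) a) (k : ℤ) :
    b * ⁅a, b⁆ ^ k * b⁻¹ = ⁅a, b⁆ ^ (-k) := by
  have hconj : b * ⁅a, b⁆ * b⁻¹ = ⁅a, b⁆⁻¹ :=
    calc b * ⁅a, b⁆ * b⁻¹ = b * a * b⁻¹ * (b ^ 2 * a⁻¹) * (b ^ 2)⁻¹ := by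
          rw [commutatorElement_def]; group
      _ = b * a * b⁻¹ * (a⁻¹ * b ^ 2) * (b ^ 2)⁻¹ := by rw [hba.inv_right.eq]
      _ = ⁅a, b⁆⁻¹ := by rw [commutatorElement_def]; group
  rw [← conj_zpow, hconj, inv_zpow']

theorem commutatorElement_zpow_mul_zpow (hac : Commute a ⁅a, b⁆) (m n : ℤ) :
    ⁅a ^ m, b * a ^ n⁆ = ⁅a, b⁆ ^ m :=
  calc ⁅a ^ m, b * a ^ n⁆ = ⁅a ^ m, b⁆ := by simp only [commutatorElement_def]; group
    _ = ⁅a, b⁆ ^ m := commutatorElement_zpow_left hac m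

theorem commutatorElement_mul_zpow_mul_zpow (hac : Commute a ⁅a, b⁆) (hba : Commute (b ^ 2) a)
    (m n : ℤ) : ⁅b * a ^ m, b * a ^ n⁆ = ⁅a, b⁆ ^ (n - m) :=
  calc ⁅b * a ^ m, b * a ^ n⁆ = b * (a ^ m * (b * a ^ (n - m) * b⁻¹) * a ^ (-n)) * b⁻¹ := by
        rw [commutatorElement_def]; group
    _ = b * ⁅a, b⁆ ^ (m - n) * b⁻¹ := by
        rw [conj_zpow_eq_of_commute_commutatorElement hac, ← mul_assoc (a ^ m),
          (hac.zpow_zpow m _).eq]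
        group
    _ = ⁅a, b⁆ ^ (n - m) := by rw [conj_commutatorElement_zpow hba, neg_sub]

theorem commutatorElement_mem_zpowers_commutatorElement (hac : Commute a ⁅a, b⁆)
    (hba : Commute (b ^ 2) a) {x y : G} (hx : ∃ m : ℤ, x = a ^ m ∨ x = b * a ^ m)
    (hy : ∃ n : ℤ, y = a ^ n ∨ y = b * a ^ n) : ⁅x, y⁆ ∈ zpowers ⁅a, b⁆ := by
  obtain ⟨m, rfl | rfl⟩ := hx <;> obtain ⟨n, rfl | rfl⟩ := hy
  · rw [commutatorElement_eq_one_iff_commute.mpr ((Commute.refl a).zpow_zpow m n)]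
    exact one_mem _
  · rw [commutatorElement_zpow_mul_zpow hac]
    exact zpow_mem_zpowers _ m
  · rw [← commutatorElement_inv (a ^ n), commutatorElement_zpow_mul_zpow hac]
    exact inv_mem (zpow_mem_zpowers _ n)
  · rw [commutatorElement_mul_zpow_mul_zpow hac hba]
    exact zpow_mem_zpowers _ _

end DihedralPair

theorem commutatorElement_mul_mul_of_mem_center {G : Type*} [Group G] {x y z w : G}
    (hz : z ∈ center G) (hw : w ∈ center G) : ⁅x * z, y * w⁆ = ⁅x, y⁆ := by
  have conj_eq {c : G} (hc : c ∈ center G) (g : G) : c * g * c⁻¹ = g :=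
    mul_inv_eq_of_eq_mul (mem_center_iff.mp hc g).symm
  calc ⁅x * z, y * w⁆ = x * (z * (y * w) * z⁻¹) * x⁻¹ * w⁻¹ * y⁻¹ := by
        rw [commutatorElement_def]; group
    _ = x * y * (w * x⁻¹ * w⁻¹) * y⁻¹ := by rw [conj_eq hz]; group
    _ = ⁅x, y⁆ := by rw [conj_eq hw, commutatorElement_def]

section DihedralCentralQuotient

variable {G : Type*} [Group G] {n : ℕ} {f : G →* DihedralGroup n} {a b : G}
  (hf : f.ker = center G) (ha : f a = r 1) (hb : f b = sr 0)
include hf ha hb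

theorem commute_commutatorElement_of_map_eq_r_sr : Commute a ⁅a, b⁆ := by
  have hz : ⁅a, b⁆ * (a ^ 2)⁻¹ ∈ center G := by
    rw [← hf, MonoidHom.mem_ker, map_mul, map_commutatorElement, map_inv, map_pow, ha, hb]
    simp [commutatorElement_def, sq]
  simpa using
    (show Commute a _ from mem_center_iff.mp hz a).mul_right ((Commute.refl a).pow_right 2)

omit ha in
theorem commute_sq_of_map_eq_r_sr : Commute (b ^ 2) a := by
  have hz : b ^ 2 ∈ center G := by
    rw [← hf, MonoidHom.mem_ker, map_pow, hb]
    simp [sq]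
  exact (mem_center_iff.mp hz a).symm

theorem exists_eq_mul_mem_center_of_map_eq_r_sr (g : G) : ∃ x z,
    (∃ m : ℤ, x = a ^ m ∨ x = b * a ^ m) ∧ z ∈ center G ∧ g = x * z := by
  have of_map_eq (x : G) (hx : f x = f g) : ∃ z ∈ center G, g = x * z :=
    ⟨x⁻¹ * g, by rw [← hf, MonoidHom.mem_ker, map_mul, map_inv, hx, inv_mul_cancel], by group⟩
  cases hg : f g with
  | r i =>
    obtain ⟨z, hz, hgz⟩ := of_map_eq (a ^ (i.cast : ℤ)) <| by
      rw [hg, map_zpow, ha, r_one_zpow, ZMod.intCast_zmod_cast]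
    exact ⟨_, z, ⟨_, Or.inl rfl⟩, hz, hgz⟩
  | sr i =>
    obtain ⟨z, hz, hgz⟩ := of_map_eq (b * a ^ (i.cast : ℤ)) <| by
      rw [hg, map_mul, map_zpow, ha, hb, r_one_zpow, ZMod.intCast_zmod_cast, sr_mul_r, zero_add]
    exact ⟨_, z, ⟨_, Or.inr rfl⟩, hz, hgz⟩

theorem mem_center_iff_commute_of_map_eq_r_sr {x : G} :
    x ∈ center G ↔ Commute x a ∧ Commute x b := by
  refine ⟨fun hx => ⟨(show Commute a x from mem_center_iff.mp hx a).symm,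
    (show Commute b x from mem_center_iff.mp hx b).symm⟩, fun ⟨hxa, hxb⟩ => ?_⟩
  refine mem_center_iff.mpr fun g => ?_
  obtain ⟨y, z, ⟨m, rfl | rfl⟩, hz, rfl⟩ := exists_eq_mul_mem_center_of_map_eq_r_sr hf ha hb g <;>
    have hxz : Commute x z := mem_center_iff.mp hz x
  · exact ((hxa.zpow_right m).mul_right hxz).symm
  · exact ((hxb.mul_right (hxa.zpow_right m)).mul_right hxz).symm

theorem commutator_eq_zpowers_of_map_eq_r_sr : commutator G = zpowers ⁅a, b⁆ := by
  refine le_antisymm ?_ (zpowers_le.mpr (commutator_mem_commutator (mem_top a) (mem_top b)))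
  rw [_root_.commutator_def, commutator_le]
  intro g _ g' _
  obtain ⟨x, z, hx, hz, rfl⟩ := exists_eq_mul_mem_center_of_map_eq_r_sr hf ha hb g
  obtain ⟨y, w, hy, hw, rfl⟩ := exists_eq_mul_mem_center_of_map_eq_r_sr hf ha hb g'
  rw [commutatorElement_mul_mul_of_mem_center hz hw]
  exact commutatorElement_mem_zpowers_commutatorElement
    (commute_commutatorElement_of_map_eq_r_sr hf ha hb) (commute_sq_of_map_eq_r_sr hf hb) hx hy

theorem orderOf_commutatorElement_of_map_eq_r_sr : orderOf ⁅a, b⁆ = n := by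
  rw [← orderOf_r_one (n := n), orderOf_eq_orderOf_iff]
  intro k
  rw [← zpow_natCast,
    ← commutatorElement_zpow_left (commute_commutatorElement_of_map_eq_r_sr hf ha hb),
    commutatorElement_eq_one_iff_commute, zpow_natCast, ← ha, ← map_pow, ← MonoidHom.mem_ker, hf,
    mem_center_iff_commute_of_map_eq_r_sr hf ha hb]
  simp [(Commute.refl a).pow_left k]

end DihedralCentralQuotient

theorem stmt0 {G : Type*} [Group G] (ℓ : ℕ)
    (h : Nonempty ((G ⧸ Subgroup.center G) ≃* DihedralGroup (2 ^ ℓ))) :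
    IsCyclic (commutator G) ∧ Nat.card (commutator G) = 2 ^ ℓ := by
  obtain ⟨e⟩ := h
  let f : G →* DihedralGroup (2 ^ ℓ) := (e : _ →* _).comp (QuotientGroup.mk' (center G))
  have hf : f.ker = center G := by ext; simp [f]
  have hf_surj : Function.Surjective f := e.surjective.comp (QuotientGroup.mk'_surjective _)
  obtain ⟨a, ha⟩ := hf_surj (r 1)
  obtain ⟨b, hb⟩ := hf_surj (sr 0)
  rw [commutator_eq_zpowers_of_map_eq_r_sr hf ha hb]
  exact ⟨isCyclic_zpowers _,
    by rw [Nat.card_zpowers, orderOf_commutatorElement_of_map_eq_r_sr hf ha hb]⟩
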